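/- arXiv:2203.14582 — 4 statements merged into one kernel-verified Lean document; each statement's English description precedes it below -/
import Mathlib

section
/- For coprime integers d, c with c > 0 and d odd, the Hardy sum satisfies S₄(d,c) = 8·s(d,2c) - 4·s(d,c), where s is the classical Dedekind sum. -/
/-! For non-integral `x`, `(-1)^⌊x⌋ = 2((x)) - 4((x/2))`. Applied at `x = kd/c` this writes
`S₄(d,c)` as `2 ∑ ((kd/c)) - 4 ∑ ((kd/2c))`, where the first sum vanishes since `((·))` is odd.
The Dedekind sums are `s(d,c) = (1/c) ∑ k((kd/c))` and, folding `k ↦ 2c - k`,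
`s(d,2c) = (1/c) ∑ k((kd/2c)) - ∑ ((kd/2c))`, with `k` running over `1, …, c-1`. The remaining
relation between the weighted sums comes from `k ↦ c - k`, which fixes `(-1)^⌊kd/c⌋` since `d`
is odd. -/

open Finset

/-- The sawtooth function `((x))`. -/
noncomputable def sawtooth (x : ℝ) : ℝ := if (⌊x⌋ : ℝ) = x then 0 else x - ⌊x⌋ - 1/2

/-- The classical Dedekind sum `s(a,b)`. -/
noncomputable def dedekindS (a b : ℤ) : ℝ :=
  ∑ k ∈ Finset.Icc (1 : ℤ) (|b| - 1), sawtooth ((k : ℝ) / b) * sawtooth ((k * a : ℝ) / b)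

/-- The Hardy sum `S₄(d,c) = ∑_{k=1}^{c-1} (-1)^⌊kd/c⌋`. -/
noncomputable def hardyS4 (d c : ℤ) : ℤ :=
  ∑ k ∈ Finset.Icc (1 : ℤ) (c - 1), ((⌊(k * d : ℚ) / c⌋).negOnePow : ℤ)

section

variable {M : Type*} [AddCommMonoid M]

lemma sum_Icc_comp_const_sub (f : ℤ → M) (a b c : ℤ) :
    ∑ k ∈ Icc a b, f (c - k) = ∑ k ∈ Icc (c - b) (c - a), f k := by
  refine sum_nbij' (c - ·) (c - ·) ?_ ?_ ?_ ?_ ?_ <;> intro k hk <;> simp only [mem_Icc] at * <;>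
    omega

lemma sum_Icc_one_two_mul_sub_one (f : ℤ → M) {n : ℤ} (hn : 0 < n) :
    ∑ k ∈ Icc 1 (2 * n - 1), f k = ∑ k ∈ Icc 1 (n - 1), (f k + f (2 * n - k)) + f n := by
  have hsplit : Icc 1 (2 * n - 1) = Icc 1 (n - 1) ∪ insert n (Icc (n + 1) (2 * n - 1)) := by
    ext k; simp only [mem_Icc, mem_union, mem_insert]; omega
  have hdisj : Disjoint (Icc 1 (n - 1)) (insert n (Icc (n + 1) (2 * n - 1))) := by
    simp only [disjoint_left, mem_Icc, mem_insert]; omega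
  rw [hsplit, sum_union hdisj, sum_insert (by simp), sum_add_distrib, sum_Icc_comp_const_sub,
    show 2 * n - (n - 1) = n + 1 by ring]
  abel

lemma two_mul_sum_Icc_mul_eq_of_symm {R : Type*} [CommRing R] {n : ℤ} {f : ℤ → R}
    (hf : ∀ k ∈ Icc 1 (n - 1), f (n - k) = f k) :
    2 * ∑ k ∈ Icc 1 (n - 1), (k : R) * f k = n * ∑ k ∈ Icc 1 (n - 1), f k := by
  have hterm : ∀ k ∈ Icc 1 (n - 1), ((n - k : ℤ) : R) * f (n - k) = n * f k - k * f k := by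
    intro k hk
    rw [hf k hk, Int.cast_sub, sub_mul]
  have hrefl := sum_Icc_comp_const_sub (fun k : ℤ => (k : R) * f k) 1 (n - 1) n
  rw [sub_sub_cancel, sum_congr rfl hterm, sum_sub_distrib, ← mul_sum] at hrefl
  linear_combination -hrefl

end

lemma sawtooth_eq_ite_fract (x : ℝ) :
    sawtooth x = if Int.fract x = 0 then 0 else Int.fract x - 1 / 2 := by
  simp only [sawtooth, Int.fract, sub_eq_zero, eq_comm (a := x)]

lemma sawtooth_add_intCast (x : ℝ) (n : ℤ) : sawtooth (x + n) = sawtooth x := by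
  simp only [sawtooth_eq_ite_fract, Int.fract_add_intCast]

lemma sawtooth_intCast_add (n : ℤ) (x : ℝ) : sawtooth (n + x) = sawtooth x := by
  rw [add_comm, sawtooth_add_intCast]

lemma sawtooth_neg (x : ℝ) : sawtooth (-x) = -sawtooth x := by
  by_cases hx : Int.fract x = 0
  · simp [sawtooth_eq_ite_fract, hx]
  · rw [sawtooth_eq_ite_fract, sawtooth_eq_ite_fract, if_neg (Int.fract_neg_eq_zero.not.mpr hx),
      if_neg hx, Int.fract_neg hx]
    ring

lemma sawtooth_of_mem_Ioo {x : ℝ} (h0 : 0 < x) (h1 : x < 1) : sawtooth x = x - 1 / 2 := by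
  rw [sawtooth_eq_ite_fract, Int.fract_eq_self.mpr ⟨h0.le, h1⟩, if_neg h0.ne']

lemma negOnePow_floor_eq_sawtooth {x : ℝ} (hx : Int.fract x ≠ 0) :
    ((⌊x⌋.negOnePow : ℤ) : ℝ) = 2 * sawtooth x - 4 * sawtooth (x / 2) := by
  set r := Int.fract x
  have hr0 : 0 < r := (Int.fract_nonneg x).lt_of_ne' hx
  have hr1 : r < 1 := Int.fract_lt_one x
  have hxr : x = ⌊x⌋ + r := (Int.floor_add_fract x).symm
  have hsx : sawtooth x = r - 1 / 2 := by
    rw [hxr, sawtooth_intCast_add, sawtooth_of_mem_Ioo hr0 hr1]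
  -- `x / 2` has fractional part `r / 2` or `(1 + r) / 2` according to the parity of `⌊x⌋`.
  rcases Int.even_or_odd' ⌊x⌋ with ⟨t, ht | ht⟩
  · have hx2 : x / 2 = t + r / 2 := by rw [hxr, ht]; push_cast; ring
    rw [hsx, hx2, sawtooth_intCast_add, sawtooth_of_mem_Ioo (by linarith) (by linarith), ht,
      Int.negOnePow_two_mul]
    push_cast; ring
  · have hx2 : x / 2 = t + (1 + r) / 2 := by rw [hxr, ht]; push_cast; ring
    rw [hsx, hx2, sawtooth_intCast_add, sawtooth_of_mem_Ioo (by linarith) (by linarith), ht,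
      Int.negOnePow_two_mul_add_one]
    push_cast; ring

lemma sawtooth_sub_mul_div {y : ℝ} (hy : y ≠ 0) (a : ℤ) (x : ℝ) :
    sawtooth ((y - x) * a / y) = -sawtooth (x * a / y) := by
  have : (y - x) * a / y = a + -(x * a / y) := by field_simp; ring
  rw [this, sawtooth_intCast_add, sawtooth_neg]

lemma negOnePow_floor_intCast_sub {n : ℤ} (hn : Odd n) {x : ℝ} (hx : Int.fract x ≠ 0) :
    ⌊(n : ℝ) - x⌋.negOnePow = ⌊x⌋.negOnePow := by
  have hceil : ⌈x⌉ = ⌊x⌋ + 1 :=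
    (Int.ceil_eq_floor_add_one_iff_notMem x).mpr (Int.fract_ne_zero_iff.mp hx)
  obtain ⟨m, rfl⟩ := hn
  rw [sub_eq_add_neg, Int.floor_intCast_add, Int.floor_neg, hceil, Int.negOnePow_eq_iff]
  exact ⟨m - ⌊x⌋, by ring⟩

lemma fract_mul_div_ne_zero {a b k : ℤ} (hab : IsCoprime a b) (hk : k ∈ Icc 1 (b - 1)) :
    Int.fract ((k * a : ℝ) / b) ≠ 0 := by
  rw [mem_Icc] at hk
  rw [Ne, Int.fract_eq_zero_iff]
  rintro ⟨m, hm⟩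
  have hb : (b : ℝ) ≠ 0 := by exact_mod_cast (show b ≠ 0 by omega)
  have hdvd : b ∣ k * a := by
    rw [eq_div_iff hb] at hm
    exact ⟨m, by exact_mod_cast hm.symm.trans (mul_comm _ _)⟩
  have := Int.le_of_dvd (by omega) (hab.symm.dvd_of_dvd_mul_right hdvd)
  omega

lemma sum_sawtooth_mul_div_eq_zero (a : ℤ) {b : ℤ} (hb : b ≠ 0) :
    ∑ k ∈ Icc 1 (b - 1), sawtooth (k * a / b) = 0 := by
  have hb' : (b : ℝ) ≠ 0 := Int.cast_ne_zero.mpr hb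
  have hrefl := sum_Icc_comp_const_sub (fun k : ℤ => sawtooth (k * a / b)) 1 (b - 1) b
  simp only [Int.cast_sub, sawtooth_sub_mul_div hb', sum_neg_distrib, sub_sub_cancel] at hrefl
  linarith

lemma dedekindS_eq_sum_mul_sawtooth (a : ℤ) {b : ℤ} (hb : 0 < b) :
    dedekindS a b = (∑ k ∈ Icc 1 (b - 1), k * sawtooth (k * a / b)) / b := by
  have hb' : (0 : ℝ) < b := Int.cast_pos.mpr hb
  have hterm : ∀ k ∈ Icc 1 (b - 1), sawtooth (k / b) * sawtooth (k * a / b)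
      = k * sawtooth (k * a / b) / b - sawtooth (k * a / b) / 2 := by
    intro k hk
    rw [mem_Icc] at hk
    have hk1 : (1 : ℝ) ≤ k := by exact_mod_cast hk.1
    have hkb : (k : ℝ) + 1 ≤ b := by exact_mod_cast (by omega : k + 1 ≤ b)
    rw [sawtooth_of_mem_Ioo (by positivity) ((div_lt_one hb').mpr (by linarith))]
    ring
  rw [dedekindS, abs_of_pos hb, sum_congr rfl hterm, sum_sub_distrib, ← sum_div, ← sum_div,
    sum_sawtooth_mul_div_eq_zero a hb.ne']
  ring

lemma dedekindS_two_mul_eq (d : ℤ) (hd : Odd d) {c : ℤ} (hc : 0 < c) :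
    dedekindS d (2 * c) = (∑ k ∈ Icc 1 (c - 1), k * sawtooth (k * d / (2 * c))) / c
      - ∑ k ∈ Icc 1 (c - 1), sawtooth (k * d / (2 * c)) := by
  have hc' : (c : ℝ) ≠ 0 := Int.cast_ne_zero.mpr hc.ne'
  have hmid : sawtooth (c * d / (2 * c)) = 0 := by
    obtain ⟨m, rfl⟩ := hd
    have : (c : ℝ) * ↑(2 * m + 1) / (2 * c) = m + 1 / 2 := by field_simp; push_cast; ring
    rw [this, sawtooth_intCast_add, sawtooth_of_mem_Ioo (by norm_num) (by norm_num)]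
    norm_num
  have hpair : ∀ k ∈ Icc 1 (c - 1), k * sawtooth (k * d / (2 * c))
      + ↑(2 * c - k) * sawtooth (↑(2 * c - k) * d / (2 * c))
      = 2 * (k * sawtooth (k * d / (2 * c)) - c * sawtooth (k * d / (2 * c))) := by
    intro k _
    rw [Int.cast_sub, Int.cast_mul, Int.cast_two,
      sawtooth_sub_mul_div (mul_ne_zero two_ne_zero hc')]
    ring
  rw [dedekindS_eq_sum_mul_sawtooth d (by omega), Int.cast_mul, Int.cast_two,
    sum_Icc_one_two_mul_sub_one _ hc, sum_congr rfl hpair, hmid, mul_zero, add_zero,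
    ← mul_sum, sum_sub_distrib, ← mul_sum,
    mul_div_mul_left _ _ two_ne_zero, sub_div, mul_div_cancel_left₀ _ hc']

lemma hardyS4_eq_sum_real (d c : ℤ) :
    (hardyS4 d c : ℝ) = ∑ k ∈ Icc 1 (c - 1), ((⌊(k * d : ℝ) / c⌋.negOnePow : ℤ) : ℝ) := by
  rw [hardyS4, Int.cast_sum]
  refine sum_congr rfl fun k _ => ?_
  rw [← Rat.floor_cast (α := ℝ)]
  push_cast
  rfl

lemma negOnePow_floor_sub_mul_div {d c k : ℤ} (hd : Odd d) (hdc : IsCoprime d c)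
    (hk : k ∈ Icc 1 (c - 1)) :
    ⌊((c - k : ℤ) * d : ℝ) / c⌋.negOnePow = ⌊(k * d : ℝ) / c⌋.negOnePow := by
  have hc : (c : ℝ) ≠ 0 := Int.cast_ne_zero.mpr (by rw [mem_Icc] at hk; omega)
  have : ((c - k : ℤ) * d : ℝ) / c = d - k * d / c := by field_simp; push_cast; ring
  rw [this, negOnePow_floor_intCast_sub hd (fract_mul_div_ne_zero hdc hk)]

/-- **Hardy sums in terms of Dedekind sums.** For coprime integers `d, c` with `c > 0`
and `d` odd, `S₄(d,c) = 8 s(d,2c) - 4 s(d,c)`. -/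
theorem hardyS4_eq_dedekind_comb (d c : ℤ) (hc : 0 < c) (hdo : Odd d)
    (hcop : Int.gcd d c = 1) :
    (hardyS4 d c : ℝ) = 8 * dedekindS d (2 * c) - 4 * dedekindS d c := by
  have hdc : IsCoprime d c := Int.isCoprime_iff_gcd_eq_one.mpr hcop
  have hc' : (c : ℝ) ≠ 0 := Int.cast_ne_zero.mpr hc.ne'
  have hsawtooth : ∀ k ∈ Icc 1 (c - 1), ((⌊(k * d : ℝ) / c⌋.negOnePow : ℤ) : ℝ)
      = 2 * sawtooth (k * d / c) - 4 * sawtooth (k * d / (2 * c)) := fun k hk => by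
    rw [negOnePow_floor_eq_sawtooth (fract_mul_div_ne_zero hdc hk), div_div, mul_comm (c : ℝ)]
  have hsum := sum_congr rfl hsawtooth
  have hweighted : ∑ k ∈ Icc 1 (c - 1), k * ((⌊(k * d : ℝ) / c⌋.negOnePow : ℤ) : ℝ)
      = 2 * ∑ k ∈ Icc 1 (c - 1), k * sawtooth (k * d / c)
        - 4 * ∑ k ∈ Icc 1 (c - 1), k * sawtooth (k * d / (2 * c)) := by
    rw [mul_sum, mul_sum, ← sum_sub_distrib]
    exact sum_congr rfl fun k hk => by rw [hsawtooth k hk]; ring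
  rw [sum_sub_distrib, ← mul_sum, ← mul_sum] at hsum
  have hsym := two_mul_sum_Icc_mul_eq_of_symm
    (f := fun k : ℤ => ((⌊(k * d : ℝ) / c⌋.negOnePow : ℤ) : ℝ))
    fun k hk =>
      congrArg (fun u : ℤˣ => ((u : ℤ) : ℝ)) (negOnePow_floor_sub_mul_div hdo hdc hk)
  rw [hardyS4_eq_sum_real, dedekindS_two_mul_eq d hdo hc, dedekindS_eq_sum_mul_sawtooth d hc]
  rw [hsum, hweighted, sum_sawtooth_mul_div_eq_zero d hc.ne'] at hsym
  rw [hsum, sum_sawtooth_mul_div_eq_zero d hc.ne']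
  linear_combination (1 / c) * hsym
    - 4 * (∑ k ∈ Icc 1 (c - 1), sawtooth (k * d / (2 * c))) * mul_inv_cancel₀ hc'
end

section
/- Let u, v, w be pairwise coprime positive integers. Then the number of integer points (x,y,z) with 0 < x/u + y/v + z/w < 1 and x,y,z ≥ 0 equals uvw/6 + (uv+uw+vw)/4 + (u+v+w)/4 + (1/12)(uv/w + uw/v + vw/u) + 1/(12uvw) - 2 - (s(uv,w) + s(uw,v) + s(vw,u)). -/
open Finset

/-!
Write `n = u v w` and `S = x/u + y/v + z/w`. The points counted are the points of the box
`[0,u) × [0,v) × [0,w)` with `S < 1` other than the origin. On the box `0 ≤ S < 3`, so the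
indicator of `S < 1` is the quadratic `(q - 1)(q - 2)/2` in `q = ⌊S⌋ = S - {S}`. Summing it
over the box leaves three kinds of non-elementary sums. By the Chinese remainder theorem, `S` runs through the fractions `t/n`
modulo `1` as the point runs through the box, which gives `∑ {S}` and `∑ {S}²`. For
`∑ (x/u) {S}`, summing over `y, z` first and using Hermite's identity
`∑_{k<N} {α + k/N} = {Nα} + (N-1)/2` leaves `∑_x (x/u) {vw x/u} = s(vw, u) + (u-1)/4`.
-/

theorem Function.Periodic.sum_intCast_div {f : ℝ → ℝ} (hf : Function.Periodic f 1)
    {ι : Type*} {s : Finset ι} {N : ℕ} (hs : #s = N) {g : ι → ℤ}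
    (hg : ∀ i ∈ s, ∀ j ∈ s, g i ≡ g j [ZMOD N] → i = j) :
    ∑ i ∈ s, f (g i / N) = ∑ t ∈ range N, f (t / N) := by
  rcases N.eq_zero_or_pos with rfl | hN
  · simp [card_eq_zero.mp hs]
  set r : ι → ℕ := fun i => (g i % N).toNat
  have hr (i : ι) : (r i : ℤ) = g i % N :=
    Int.toNat_of_nonneg (Int.emod_nonneg _ (by positivity))
  have hfr (i : ι) : f (g i / N) = f (r i / N) := by
    have hdiv : (r i : ℝ) / N = g i / N - (g i / N : ℤ) * 1 := by
      have := Int.emod_add_mul_ediv (g i) N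
      rw [← hr] at this
      field_simp
      exact_mod_cast (eq_sub_of_add_eq this)
    rw [hdiv, hf.sub_int_mul_eq]
  have hinj : Set.InjOn r s := fun i hi j hj hij =>
    hg i hi j hj (by simpa [Int.ModEq, ← hr] using congrArg (Nat.cast : ℕ → ℤ) hij)
  have himage : s.image r = range N := by
    refine eq_of_subset_of_card_le (fun t ht => ?_)
      (by rw [card_image_of_injOn hinj, hs, card_range])
    obtain ⟨i, -, rfl⟩ := mem_image.mp ht
    have := Int.emod_lt_of_pos (g i) (Int.natCast_pos.mpr hN)
    rw [mem_range, ← Int.ofNat_lt, hr]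
    exact this
  rw [sum_congr rfl fun i _ => hfr i, ← himage, sum_image hinj]

theorem Nat.eq_of_mul_modEq_mul {P Q a a' : ℕ} (hPQ : P.Coprime Q) (ha : a < P) (ha' : a' < P)
    (h : Q * a ≡ Q * a' [MOD P]) : a = a' := by
  have := Nat.ModEq.cancel_left_of_coprime hPQ h
  rwa [Nat.ModEq, Nat.mod_eq_of_lt ha, Nat.mod_eq_of_lt ha'] at this

theorem Function.Periodic.sum_sum_div_add_div {f : ℝ → ℝ} (hf : Function.Periodic f 1)
    {P Q : ℕ} (hPQ : P.Coprime Q) :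
    ∑ a ∈ range P, ∑ b ∈ range Q, f (a / P + b / Q)
      = ∑ t ∈ range (P * Q), f (t / (P * Q)) := by
  rcases P.eq_zero_or_pos with rfl | hP
  · simp
  rcases Q.eq_zero_or_pos with rfl | hQ
  · simp
  have hdiv (p : ℕ × ℕ) :
      (p.1 : ℝ) / P + p.2 / Q = ((Q * p.1 + P * p.2 : ℕ) : ℤ) / ((P * Q : ℕ) : ℝ) := by
    push_cast
    field_simp
  have hinj : ∀ p ∈ range P ×ˢ range Q, ∀ p' ∈ range P ×ˢ range Q,
      ((Q * p.1 + P * p.2 : ℕ) : ℤ) ≡ ((Q * p'.1 + P * p'.2 : ℕ) : ℤ) [ZMOD (P * Q : ℕ)]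
        → p = p' := by
    intro p hp p' hp' h
    simp only [mem_product, mem_range] at hp hp'
    rw [Int.natCast_modEq_iff] at h
    have h1 : Q * p.1 ≡ Q * p'.1 [MOD P] := by
      simpa [Nat.ModEq, Nat.add_mul_mod_self_left] using h.of_mul_right Q
    have h2 : P * p.2 ≡ P * p'.2 [MOD Q] := by
      simpa [Nat.ModEq, Nat.add_mod] using h.of_mul_left P
    exact Prod.ext (Nat.eq_of_mul_modEq_mul hPQ hp.1 hp'.1 h1)
      (Nat.eq_of_mul_modEq_mul hPQ.symm hp.2 hp'.2 h2)
  rw [← sum_product', sum_congr rfl fun p _ => congrArg f (hdiv p),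
    hf.sum_intCast_div (by rw [card_product, card_range, card_range]) hinj]
  push_cast
  rfl

theorem sum_range_natCast (N : ℕ) : ∑ t ∈ range N, (t : ℝ) = N * (N - 1) / 2 := by
  induction N with
  | zero => simp
  | succ N ih => rw [sum_range_succ, ih]; push_cast; ring

theorem sum_range_natCast_sq (N : ℕ) :
    ∑ t ∈ range N, (t : ℝ) ^ 2 = N * (N - 1) * (2 * N - 1) / 6 := by
  induction N with
  | zero => simp
  | succ N ih => rw [sum_range_succ, ih]; push_cast; ring

theorem sum_range_div {N : ℕ} (hN : 0 < N) : ∑ t ∈ range N, (t : ℝ) / N = (N - 1) / 2 := by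
  rw [← sum_div, sum_range_natCast]
  field_simp

theorem sum_range_div_sq {N : ℕ} (hN : 0 < N) :
    ∑ t ∈ range N, ((t : ℝ) / N) ^ 2 = (N - 1) * (2 * N - 1) / (6 * N) := by
  simp_rw [div_pow]
  rw [← sum_div, sum_range_natCast_sq]
  field_simp

theorem Int.fract_natCast_div_of_lt {t N : ℕ} (h : t < N) :
    Int.fract ((t : ℝ) / N) = t / N := by
  rw [Int.fract_div_natCast_eq_div_natCast_mod, Nat.mod_eq_of_lt h]

theorem sum_range_fract_add_div {N : ℕ} (hN : 0 < N) (x : ℝ) :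
    ∑ k ∈ range N, Int.fract (x + k / N) = Int.fract (N * x) + (N - 1) / 2 := by
  set m := ⌊N * x⌋
  set r := Int.fract (N * x)
  have hx (k : ℕ) : x + k / N = ((m + k : ℤ) : ℝ) / N + r / N := by
    have := Int.floor_add_fract (N * x)
    field_simp
    push_cast
    linarith
  have hinj : ∀ i ∈ range N, ∀ j ∈ range N, m + i ≡ m + j [ZMOD N] → i = j := by
    intro i hi j hj hij
    have := Int.ModEq.add_left_cancel' m hij
    rw [mem_range] at hi hj
    rw [Int.ModEq, Int.emod_eq_of_lt (by positivity) (by omega),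
      Int.emod_eq_of_lt (by positivity) (by omega)] at this
    exact_mod_cast this
  calc ∑ k ∈ range N, Int.fract (x + k / N)
      = ∑ k ∈ range N, Int.fract (((m + k : ℤ) : ℝ) / N + r / N) := by simp only [hx]
    _ = ∑ t ∈ range N, Int.fract ((t : ℝ) / N + r / N) :=
      ((Int.fract_periodic ℝ).add_const _).sum_intCast_div (card_range N) hinj
    _ = ∑ t ∈ range N, ((t : ℝ) / N + r / N) := by
      refine sum_congr rfl fun t ht => Int.fract_eq_self.mpr ⟨by positivity, ?_⟩
      have htN : (t : ℝ) + 1 ≤ N := by exact_mod_cast mem_range.mp ht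
      rw [← add_div, div_lt_one (by positivity)]
      linarith [Int.fract_lt_one (N * x)]
    _ = r + (N - 1) / 2 := by
      rw [sum_add_distrib, sum_range_div hN, sum_const, card_range, nsmul_eq_mul]
      field_simp
      ring

theorem sum_range_fract_mul_div {h k : ℕ} (hk : 0 < k) (hhk : h.Coprime k) :
    ∑ a ∈ range k, Int.fract ((h * a : ℝ) / k) = (k - 1) / 2 := by
  have hinj : ∀ a ∈ range k, ∀ a' ∈ range k,
      ((h * a : ℕ) : ℤ) ≡ ((h * a' : ℕ) : ℤ) [ZMOD k] → a = a' :=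
    fun a ha a' ha' haa' =>
    Nat.eq_of_mul_modEq_mul hhk.symm (mem_range.mp ha) (mem_range.mp ha')
      (Int.natCast_modEq_iff.mp haa')
  have := (Int.fract_periodic ℝ).sum_intCast_div (card_range k) hinj
  push_cast at this
  rw [this, sum_congr rfl fun t ht => Int.fract_natCast_div_of_lt (mem_range.mp ht),
    sum_range_div hk]

theorem sawtooth_of_fract_ne_zero {x : ℝ} (hx : Int.fract x ≠ 0) :
    sawtooth x = Int.fract x - 1 / 2 := by
  rw [sawtooth, if_neg fun h => hx (by rw [Int.fract, h, sub_self])]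
  rfl

theorem sawtooth_natCast_div {m k : ℕ} (hk : 0 < k) (hm : ¬k ∣ m) :
    sawtooth (m / k) = Int.fract ((m : ℝ) / k) - 1 / 2 := by
  refine sawtooth_of_fract_ne_zero ?_
  rw [Int.fract_div_natCast_eq_div_natCast_mod]
  have : m % k ≠ 0 := fun h => hm (Nat.dvd_of_mod_eq_zero h)
  positivity

theorem dedekindS_natCast {h k : ℕ} (hk : 0 < k) (hhk : h.Coprime k) :
    dedekindS h k
      = ∑ a ∈ range k, ((a : ℝ) / k - 1 / 2) * (Int.fract ((h * a : ℝ) / k) - 1 / 2)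
        - 1 / 4 := by
  obtain ⟨k, rfl⟩ := Nat.exists_eq_add_one_of_ne_zero hk.ne'
  rw [sum_range_succ', dedekindS, Int.Icc_eq_finset_map, sum_map]
  have hlen : ((|((k + 1 : ℕ) : ℤ)| - 1 + 1 - 1).toNat) = k := by
    rw [abs_of_nonneg (by positivity)]; omega
  simp only [hlen, Function.Embedding.trans_apply, Nat.castEmbedding_apply, addLeftEmbedding_apply]
  simp only [Nat.cast_zero, zero_div, mul_zero, Int.fract_zero]
  rw [add_sub_assoc, show (0 - 1 / 2) * (0 - 1 / 2 : ℝ) - 1 / 4 = 0 by norm_num, add_zero]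
  refine sum_congr rfl fun j hj => ?_
  have hj : j + 1 < k + 1 := by simpa using hj
  have hdvd : ¬(k + 1) ∣ j + 1 := Nat.not_dvd_of_pos_of_lt (by omega) hj
  have hdvd' : ¬(k + 1) ∣ h * (j + 1) := fun hd => hdvd (hhk.symm.dvd_of_dvd_mul_left hd)
  have e1 : (((1 + j : ℤ)) : ℝ) / ((k + 1 : ℕ) : ℤ)
      = ((j + 1 : ℕ) : ℝ) / (k + 1 : ℕ) := by
    push_cast; ring
  have e2 : (((1 + j : ℤ)) : ℝ) * ((h : ℤ) : ℝ) / ((k + 1 : ℕ) : ℤ)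
      = ((h * (j + 1) : ℕ) : ℝ) / (k + 1 : ℕ) := by
    push_cast; ring
  rw [e1, e2, sawtooth_natCast_div hk hdvd, sawtooth_natCast_div hk hdvd',
    Int.fract_natCast_div_of_lt hj]
  push_cast
  ring

theorem sum_range_div_mul_fract_mul_div {h k : ℕ} (hk : 0 < k) (hhk : h.Coprime k) :
    ∑ a ∈ range k, (a : ℝ) / k * Int.fract ((h * a : ℝ) / k)
      = dedekindS h k + (k - 1) / 4 := by
  set F : ℕ → ℝ := fun a => Int.fract ((h * a : ℝ) / k)
  calc ∑ a ∈ range k, (a : ℝ) / k * F a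
      = ∑ a ∈ range k, (((a : ℝ) / k - 1 / 2) * (F a - 1 / 2) + (F a + a / k) / 2 - 1 / 4) :=
        sum_congr rfl fun _ _ => by ring
    _ = dedekindS h k + (k - 1) / 4 := by
      rw [sum_sub_distrib, sum_add_distrib, ← sum_div, sum_add_distrib, dedekindS_natCast hk hhk,
        sum_range_fract_mul_div hk hhk, sum_range_div hk, sum_const, card_range, nsmul_eq_mul]
      ring

theorem ite_lt_one_eq_of_nonneg_of_lt_three {s : ℝ} (h0 : 0 ≤ s) (h3 : s < 3) :
    (if s < 1 then 1 else 0 : ℝ) = (s - Int.fract s - 1) * (s - Int.fract s - 2) / 2 := by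
  have hlo : 0 ≤ ⌊s⌋ := Int.floor_nonneg.mpr h0
  have hhi : ⌊s⌋ < 3 := Int.floor_lt.mpr (by exact_mod_cast h3)
  rw [Int.self_sub_fract]
  simp_rw [show s < 1 ↔ ⌊s⌋ < 1 by rw [Int.floor_lt]; norm_num]
  interval_cases ⌊s⌋ <;> norm_num

section Box

variable {U V W : ℕ}

theorem natCast_div_add_div_add_div_pos_iff (hU : 0 < U) (hV : 0 < V) (hW : 0 < W)
    (p : ℕ × ℕ × ℕ) :
    0 < (p.1 : ℝ) / U + (p.2.1 : ℝ) / V + (p.2.2 : ℝ) / W ↔ p ≠ 0 := by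
  obtain ⟨a, b, c⟩ := p
  have ha : 0 ≤ (a : ℝ) / U := by positivity
  have hb : 0 ≤ (b : ℝ) / V := by positivity
  have hc : 0 ≤ (c : ℝ) / W := by positivity
  simp only [ne_eq, Prod.mk_eq_zero]
  constructor
  · rintro hpos ⟨rfl, rfl, rfl⟩
    simp at hpos
  · intro hp
    by_contra! hle
    have ha0 : (a : ℝ) / U = 0 := by linarith
    have hb0 : (b : ℝ) / V = 0 := by linarith
    have hc0 : (c : ℝ) / W = 0 := by linarith
    simp [hU.ne', hV.ne', hW.ne'] at ha0 hb0 hc0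
    exact hp ⟨ha0, hb0, hc0⟩

theorem setOf_tetrahedron_eq_image (hU : 0 < U) (hV : 0 < V) (hW : 0 < W) :
    {p : ℤ × ℤ × ℤ | 0 ≤ p.1 ∧ 0 ≤ p.2.1 ∧ 0 ≤ p.2.2 ∧
        0 < (p.1 : ℝ) / U + (p.2.1 : ℝ) / V + (p.2.2 : ℝ) / W ∧
        (p.1 : ℝ) / U + (p.2.1 : ℝ) / V + (p.2.2 : ℝ) / W < 1}
      = Prod.map Nat.cast (Prod.map Nat.cast Nat.cast) ''
          ↑({p ∈ range U ×ˢ range V ×ˢ range W |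
            0 < (p.1 : ℝ) / U + (p.2.1 : ℝ) / V + (p.2.2 : ℝ) / W ∧
            (p.1 : ℝ) / U + (p.2.1 : ℝ) / V + (p.2.2 : ℝ) / W < 1}
            : Finset (ℕ × ℕ × ℕ)) := by
  ext ⟨x, y, z⟩
  simp only [Set.mem_ofPred_eq, Set.mem_image, coe_filter, mem_product, mem_range]
  constructor
  · rintro ⟨hx, hy, hz, hpos, hlt⟩
    lift x to ℕ using hx
    lift y to ℕ using hy
    lift z to ℕ using hz
    simp only [Int.cast_natCast] at hpos hlt
    have hx : 0 ≤ (x : ℝ) / U := by positivity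
    have hy : 0 ≤ (y : ℝ) / V := by positivity
    have hz : 0 ≤ (z : ℝ) / W := by positivity
    have hxU : (x : ℝ) < U := (div_lt_one (by positivity)).mp (by linarith)
    have hyV : (y : ℝ) < V := (div_lt_one (by positivity)).mp (by linarith)
    have hzW : (z : ℝ) < W := (div_lt_one (by positivity)).mp (by linarith)
    exact ⟨(x, y, z),
      ⟨⟨by exact_mod_cast hxU, by exact_mod_cast hyV, by exact_mod_cast hzW⟩, hpos, hlt⟩,
      rfl⟩
  · rintro ⟨⟨a, b, c⟩, ⟨-, hpos, hlt⟩, h⟩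
    simp only [Prod.map, Prod.mk.injEq] at h
    obtain ⟨rfl, rfl, rfl⟩ := h
    simp only [Int.cast_natCast]
    exact ⟨by positivity, by positivity, by positivity, hpos, hlt⟩

theorem ncard_tetrahedron_eq_sum_box (hU : 0 < U) (hV : 0 < V) (hW : 0 < W) :
    (Set.ncard {p : ℤ × ℤ × ℤ | 0 ≤ p.1 ∧ 0 ≤ p.2.1 ∧ 0 ≤ p.2.2 ∧
        0 < (p.1 : ℝ) / U + (p.2.1 : ℝ) / V + (p.2.2 : ℝ) / W ∧
        (p.1 : ℝ) / U + (p.2.1 : ℝ) / V + (p.2.2 : ℝ) / W < 1} : ℝ)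
      = ∑ a ∈ range U, ∑ b ∈ range V, ∑ c ∈ range W,
          (if (a : ℝ) / U + b / V + c / W < 1 then 1 else 0) - 1 := by
  have hι : Function.Injective
      (Prod.map Nat.cast (Prod.map Nat.cast Nat.cast) : ℕ × ℕ × ℕ → ℤ × ℤ × ℤ) :=
    Nat.cast_injective.prodMap (Nat.cast_injective.prodMap Nat.cast_injective)
  have hterm : ∀ p ∈ range U ×ˢ range V ×ˢ range W,
      (if 0 < (p.1 : ℝ) / U + (p.2.1 : ℝ) / V + (p.2.2 : ℝ) / W ∧
          (p.1 : ℝ) / U + (p.2.1 : ℝ) / V + (p.2.2 : ℝ) / W < 1 then 1 else 0 : ℝ)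
        = (if (p.1 : ℝ) / U + (p.2.1 : ℝ) / V + (p.2.2 : ℝ) / W < 1 then 1 else 0)
          - if p = 0 then 1 else 0 := by
    intro p _
    simp_rw [natCast_div_add_div_add_div_pos_iff hU hV hW]
    by_cases hp : p = 0 <;> simp [hp]
  rw [setOf_tetrahedron_eq_image hU hV hW, Set.ncard_image_of_injective _ hι,
    Set.ncard_coe_finset, card_filter]
  push_cast
  rw [sum_congr rfl hterm, sum_sub_distrib, sum_ite_eq', if_pos (by simp [hU, hV, hW]),
    sum_product]
  simp_rw [sum_product]

theorem Function.Periodic.sum_box {f : ℝ → ℝ} (hf : Function.Periodic f 1)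
    (hUV : U.Coprime V) (hUW : U.Coprime W) (hVW : V.Coprime W) :
    ∑ a ∈ range U, ∑ b ∈ range V, ∑ c ∈ range W, f (a / U + b / V + c / W)
      = ∑ t ∈ range (U * V * W), f (t / (U * V * W)) := by
  have hinner (a : ℕ) : ∑ b ∈ range V, ∑ c ∈ range W, f (a / U + b / V + c / W)
      = ∑ k ∈ range (V * W), f (a / U + k / ((V * W : ℕ) : ℝ)) := by
    have := (hf.const_add ((a : ℝ) / U)).sum_sum_div_add_div hVW
    push_cast
    simpa only [add_assoc] using this
  simp_rw [hinner]
  rw [hf.sum_sum_div_add_div (hUV.mul_right hUW), mul_assoc]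
  push_cast
  simp_rw [mul_assoc]

theorem sum_box_comp_fract (g : ℝ → ℝ) (hUV : U.Coprime V) (hUW : U.Coprime W)
    (hVW : V.Coprime W) :
    ∑ a ∈ range U, ∑ b ∈ range V, ∑ c ∈ range W,
        g (Int.fract ((a : ℝ) / U + b / V + c / W))
      = ∑ t ∈ range (U * V * W), g ((t : ℝ) / (U * V * W)) := by
  have := ((Int.fract_periodic ℝ).comp g).sum_box hUV hUW hVW
  simp only [Function.comp_apply] at this
  rw [this]
  refine sum_congr rfl fun t ht => ?_
  have := Int.fract_natCast_div_of_lt (mem_range.mp ht)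
  push_cast at this
  simp only [this]

theorem sum_sum_fract_add_div_add_div (hV : 0 < V) (hW : 0 < W) (hVW : V.Coprime W) (x : ℝ) :
    ∑ b ∈ range V, ∑ c ∈ range W, Int.fract (x + b / V + c / W)
      = Int.fract (V * W * x) + (V * W - 1) / 2 := by
  have := sum_range_fract_add_div (Nat.mul_pos hV hW) x
  push_cast at this
  simp_rw [add_assoc]
  rw [((Int.fract_periodic ℝ).const_add x).sum_sum_div_add_div hVW, this]

theorem sum_box_div_mul_fract (hU : 0 < U) (hV : 0 < V) (hW : 0 < W)
    (hUV : U.Coprime V) (hUW : U.Coprime W) (hVW : V.Coprime W) :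
    ∑ a ∈ range U, ∑ b ∈ range V, ∑ c ∈ range W,
        (a : ℝ) / U * Int.fract ((a : ℝ) / U + b / V + c / W)
      = dedekindS (V * W) U + (U - 1) / 4 + (V * W - 1) * (U - 1) / 4 := by
  simp_rw [← mul_sum, sum_sum_fract_add_div_add_div hV hW hVW, mul_add, sum_add_distrib,
    ← sum_mul, sum_range_div hU]
  have := sum_range_div_mul_fract_mul_div hU (Nat.Coprime.mul_left hUV.symm hUW.symm)
  push_cast at this
  simp_rw [mul_div_assoc']
  rw [this]
  ring

theorem sum_box_add_sq (x y z : ℕ → ℝ) :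
    ∑ a ∈ range U, ∑ b ∈ range V, ∑ c ∈ range W, (x a + y b + z c) ^ 2
      = V * W * ∑ a ∈ range U, x a ^ 2 + U * W * ∑ b ∈ range V, y b ^ 2
        + U * V * ∑ c ∈ range W, z c ^ 2
        + 2 * (W * (∑ a ∈ range U, x a) * (∑ b ∈ range V, y b)
          + V * (∑ a ∈ range U, x a) * (∑ c ∈ range W, z c)
          + U * (∑ b ∈ range V, y b) * (∑ c ∈ range W, z c)) := by
  have hsq (a b c : ℕ) : (x a + y b + z c) ^ 2 = x a ^ 2 + y b ^ 2 + z c ^ 2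
      + 2 * x a * y b + 2 * x a * z c + 2 * y b * z c := by ring
  simp only [hsq, sum_add_distrib, sum_const, card_range, nsmul_eq_mul, ← mul_sum, ← sum_mul]
  ring

theorem sum_box_sq (hU : 0 < U) (hV : 0 < V) (hW : 0 < W) :
    ∑ a ∈ range U, ∑ b ∈ range V, ∑ c ∈ range W, ((a : ℝ) / U + b / V + c / W) ^ 2
      = V * W * ((U - 1) * (2 * U - 1) / (6 * U)) + U * W * ((V - 1) * (2 * V - 1) / (6 * V))
        + U * V * ((W - 1) * (2 * W - 1) / (6 * W))
        + 2 * (W * ((U - 1) / 2) * ((V - 1) / 2) + V * ((U - 1) / 2) * ((W - 1) / 2)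
          + U * ((V - 1) / 2) * ((W - 1) / 2)) := by
  have := sum_box_add_sq (U := U) (V := V) (W := W) (fun a => (a : ℝ) / U)
    (fun b => (b : ℝ) / V) (fun c => (c : ℝ) / W)
  rwa [sum_range_div hU, sum_range_div hV, sum_range_div hW, sum_range_div_sq hU,
    sum_range_div_sq hV, sum_range_div_sq hW] at this

theorem sum_box_fract (hU : 0 < U) (hV : 0 < V) (hW : 0 < W)
    (hUV : U.Coprime V) (hUW : U.Coprime W) (hVW : V.Coprime W) :
    ∑ a ∈ range U, ∑ b ∈ range V, ∑ c ∈ range W,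
        Int.fract ((a : ℝ) / U + b / V + c / W)
      = (U * V * W - 1) / 2 := by
  have hmean := sum_range_div (Nat.mul_pos (Nat.mul_pos hU hV) hW)
  push_cast at hmean
  rw [← hmean]
  exact sum_box_comp_fract (fun x => x) hUV hUW hVW

theorem sum_box_fract_sq (hU : 0 < U) (hV : 0 < V) (hW : 0 < W)
    (hUV : U.Coprime V) (hUW : U.Coprime W) (hVW : V.Coprime W) :
    ∑ a ∈ range U, ∑ b ∈ range V, ∑ c ∈ range W,
        Int.fract ((a : ℝ) / U + b / V + c / W) ^ 2
      = (U * V * W - 1) * (2 * (U * V * W) - 1) / (6 * (U * V * W)) := by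
  have hsq := sum_range_div_sq (Nat.mul_pos (Nat.mul_pos hU hV) hW)
  push_cast at hsq
  rw [← hsq]
  exact sum_box_comp_fract (fun x => x ^ 2) hUV hUW hVW

theorem sum_box_mul_fract (hU : 0 < U) (hV : 0 < V) (hW : 0 < W)
    (hUV : U.Coprime V) (hUW : U.Coprime W) (hVW : V.Coprime W) :
    ∑ a ∈ range U, ∑ b ∈ range V, ∑ c ∈ range W,
        ((a : ℝ) / U + b / V + c / W) * Int.fract ((a : ℝ) / U + b / V + c / W)
      = dedekindS (V * W) U + (U - 1) / 4 + (V * W - 1) * (U - 1) / 4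
        + (dedekindS (U * W) V + (V - 1) / 4 + (U * W - 1) * (V - 1) / 4)
        + (dedekindS (U * V) W + (W - 1) / 4 + (U * V - 1) * (W - 1) / 4) := by
  have hYT : ∑ a ∈ range U, ∑ b ∈ range V, ∑ c ∈ range W,
      (b : ℝ) / V * Int.fract ((a : ℝ) / U + b / V + c / W)
        = dedekindS (U * W) V + (V - 1) / 4 + (U * W - 1) * (V - 1) / 4 := by
    rw [← sum_box_div_mul_fract hV hU hW hUV.symm hVW hUW]
    conv_rhs => rw [sum_comm]
    refine sum_congr rfl fun a _ => sum_congr rfl fun b _ => sum_congr rfl fun c _ => ?_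
    rw [add_comm ((b : ℝ) / V)]
  have hZT : ∑ a ∈ range U, ∑ b ∈ range V, ∑ c ∈ range W,
      (c : ℝ) / W * Int.fract ((a : ℝ) / U + b / V + c / W)
        = dedekindS (U * V) W + (W - 1) / 4 + (U * V - 1) * (W - 1) / 4 := by
    rw [← sum_box_div_mul_fract hW hU hV hUW.symm hVW.symm hUV]
    conv_rhs => rw [sum_comm]
    refine sum_congr rfl fun a _ => ?_
    rw [sum_comm]
    refine sum_congr rfl fun c _ => sum_congr rfl fun b _ => ?_
    rw [show (c : ℝ) / W + a / U + b / V = a / U + b / V + c / W by ring]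
  simp only [add_mul, sum_add_distrib]
  rw [sum_box_div_mul_fract hU hV hW hUV hUW hVW, hYT, hZT]

theorem sum_box_ite_lt_one (hU : 0 < U) (hV : 0 < V) (hW : 0 < W)
    (hUV : U.Coprime V) (hUW : U.Coprime W) (hVW : V.Coprime W) :
    ∑ a ∈ range U, ∑ b ∈ range V, ∑ c ∈ range W,
        (if (a : ℝ) / U + b / V + c / W < 1 then 1 else 0)
      = (U : ℝ) * V * W / 6 + ((U : ℝ) * V + (U : ℝ) * W + (V : ℝ) * W) / 4
        + ((U : ℝ) + V + W) / 4
        + (1 / 12) * ((U : ℝ) * V / W + (U : ℝ) * W / V + (V : ℝ) * W / U)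
        + 1 / (12 * (U : ℝ) * V * W) - 1
        - (dedekindS (U * V) W + dedekindS (U * W) V + dedekindS (V * W) U) := by
  have hlt {a P : ℕ} (ha : a ∈ range P) : (a : ℝ) / P < 1 := by
    have := mem_range.mp ha
    rw [div_lt_one (Nat.cast_pos.mpr (by omega))]
    exact_mod_cast this
  have hsplit : ∀ a ∈ range U, ∀ b ∈ range V, ∀ c ∈ range W,
      (if (a : ℝ) / U + b / V + c / W < 1 then 1 else 0)
        = ((a : ℝ) / U + b / V + c / W) ^ 2 / 2
          - ((a : ℝ) / U + b / V + c / W) * Int.fract ((a : ℝ) / U + b / V + c / W)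
          + Int.fract ((a : ℝ) / U + b / V + c / W) ^ 2 / 2
          - ((a : ℝ) / U + b / V + c / W) * 3 / 2
          + Int.fract ((a : ℝ) / U + b / V + c / W) * 3 / 2 + 1 := by
    intro a ha b hb c hc
    rw [ite_lt_one_eq_of_nonneg_of_lt_three (by positivity)
      (by linarith [hlt ha, hlt hb, hlt hc])]
    ring
  rw [sum_congr rfl fun a ha => sum_congr rfl fun b hb => sum_congr rfl fun c hc =>
    hsplit a ha b hb c hc]
  simp only [sum_add_distrib, sum_sub_distrib, ← sum_div, ← sum_mul, sum_const, card_range,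
    nsmul_eq_mul, mul_one]
  rw [sum_box_sq hU hV hW, sum_box_mul_fract hU hV hW hUV hUW hVW,
    sum_box_fract_sq hU hV hW hUV hUW hVW, sum_box_fract hU hV hW hUV hUW hVW]
  simp only [← mul_sum, sum_range_natCast]
  field_simp
  ring

end Box

/-- **Mordell's theorem.** For pairwise coprime positive integers `u, v, w`, the number
of nonnegative integer points `(x,y,z)` with `0 < x/u + y/v + z/w < 1` equals
`uvw/6 + (uv+uw+vw)/4 + (u+v+w)/4 + (1/12)(uv/w + uw/v + vw/u) + 1/(12uvw) - 2
 - (s(uv,w) + s(uw,v) + s(vw,u))`. -/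
theorem mordell_tetrahedron (u v w : ℤ) (hu : 0 < u) (hv : 0 < v) (hw : 0 < w)
    (huv : Int.gcd u v = 1) (huw : Int.gcd u w = 1) (hvw : Int.gcd v w = 1) :
    (Set.ncard {p : ℤ × ℤ × ℤ | 0 ≤ p.1 ∧ 0 ≤ p.2.1 ∧ 0 ≤ p.2.2 ∧
        0 < (p.1 : ℝ) / u + (p.2.1 : ℝ) / v + (p.2.2 : ℝ) / w ∧
        (p.1 : ℝ) / u + (p.2.1 : ℝ) / v + (p.2.2 : ℝ) / w < 1} : ℝ)
      = (u : ℝ) * v * w / 6 + ((u : ℝ) * v + (u : ℝ) * w + (v : ℝ) * w) / 4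
        + ((u : ℝ) + v + w) / 4
        + (1 / 12) * ((u : ℝ) * v / w + (u : ℝ) * w / v + (v : ℝ) * w / u)
        + 1 / (12 * (u : ℝ) * v * w) - 2
        - (dedekindS (u * v) w + dedekindS (u * w) v + dedekindS (v * w) u) := by
  lift u to ℕ using hu.le
  lift v to ℕ using hv.le
  lift w to ℕ using hw.le
  rw [Int.gcd_natCast_natCast] at huv huw hvw
  have hu' : 0 < u := by exact_mod_cast hu
  have hv' : 0 < v := by exact_mod_cast hv
  have hw' : 0 < w := by exact_mod_cast hw
  simp only [Int.cast_natCast]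
  rw [ncard_tetrahedron_eq_sum_box hu' hv' hw', sum_box_ite_lt_one hu' hv' hw' huv huw hvw]
  ring
end

section
/- Define 𝔖(A) = S(a,c) for A = (a b; c d) ∈ Γ_θ with c ≠ 0, and 𝔖(A) = 0 for c = 0, where S(a,c) = Σ_{k=1}^{|c|-1} (-1)^{⌊ka/c⌋ + k + 1}. Then 𝔖(A⁻¹) = -𝔖(A) for all A ∈ Γ_θ. -/
/-!
Since `A⁻¹ = (d -b; -c a)`, we have `𝔖(A⁻¹) = S(d, -c)`, and two facts combine.
First, `S(x, -c) = -S(x, c)` when `gcd(x, c) = 1`: for `0 < k < |c|` the number `kx/c` is not an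
integer, so `⌊-kx/c⌋ = -⌊kx/c⌋ - 1` and every sign flips.
Second, `S(a, c) = S(d, c)`: as `ad ≡ 1 (mod c)`, `k ↦ ka mod c` permutes `1, …, c - 1` with
inverse `j ↦ jd mod c`, and writing `ka = qc + j` one gets `⌊jd/c⌋ = kb - qd`, so the exponents
`⌊ka/c⌋ + k` and `⌊jd/c⌋ + j` differ by `q(c + d + 1) - k(a + b - 1)`, which is even because the
rows of a matrix in `Γ_θ` have odd sums.
-/

open Finset

/-- The Hardy sum `S(d,c) = ∑_{k=1}^{|c|-1} (-1)^{⌊kd/c⌋+k+1}`. -/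
noncomputable def hardyS (d c : ℤ) : ℤ :=
  ∑ k ∈ Finset.Icc (1 : ℤ) (|c| - 1), ((⌊(k * d : ℚ) / c⌋ + k + 1).negOnePow : ℤ)

abbrev SL2Z := Matrix.SpecialLinearGroup (Fin 2) ℤ

/-- Membership in the theta group `Γ_θ`: `a ≡ d` and `b ≡ c (mod 2)`. -/
def inGammaTheta (A : SL2Z) : Prop :=
  A.1 0 0 % 2 = A.1 1 1 % 2 ∧ A.1 0 1 % 2 = A.1 1 0 % 2

/-- `𝔖(A) = S(a,c)` for `A = (a b; c d)` with `c ≠ 0`, and `0` otherwise. -/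
noncomputable def frakS (A : SL2Z) : ℤ :=
  if A.1 1 0 = 0 then 0 else hardyS (A.1 0 0) (A.1 1 0)

def Smat : SL2Z := ⟨!![0, -1; 1, 0], by norm_num [Matrix.det_fin_two_of]⟩
def Tmat : SL2Z := ⟨!![1, 1; 0, 1], by norm_num [Matrix.det_fin_two_of]⟩

lemma Rat.floor_intCast_div_intCast_of_pos (m : ℤ) {c : ℤ} (hc : 0 < c) :
    ⌊(m : ℚ) / c⌋ = m / c := by
  lift c to ℕ using hc.le
  exact_mod_cast Rat.floor_intCast_div_natCast m c

lemma not_dvd_mul_of_isCoprime {c x k : ℤ} (hcx : IsCoprime c x) (hk₀ : 0 < k) (hkc : k < c) :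
    ¬ c ∣ k * x := fun h => by
  have := Int.le_of_dvd hk₀ (hcx.dvd_of_dvd_mul_right h)
  omega

lemma hardyS_zero_right (x : ℤ) : hardyS x 0 = 0 := by
  simp [hardyS]

lemma hardyS_of_pos (x : ℤ) {c : ℤ} (hc : 0 < c) :
    hardyS x c = ∑ k ∈ Icc 1 (c - 1), ((k * x / c + k + 1).negOnePow : ℤ) := by
  rw [hardyS, abs_of_pos hc]
  refine sum_congr rfl fun k _ => ?_
  rw [← Int.cast_mul, Rat.floor_intCast_div_intCast_of_pos _ hc]

lemma hardyS_neg_right_of_pos {x c : ℤ} (hc : 0 < c) (hcx : IsCoprime c x) :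
    hardyS x (-c) = -hardyS x c := by
  rw [hardyS_of_pos x hc, hardyS, abs_neg, abs_of_pos hc, ← sum_neg_distrib]
  refine sum_congr rfl fun k hk => ?_
  rw [mem_Icc] at hk
  have hfloor : ⌊(k * x : ℚ) / (-c : ℤ)⌋ = -(k * x / c) - 1 := by
    rw [show (k * x : ℚ) / (-c : ℤ) = (-(k * x) : ℤ) / (c : ℚ) by push_cast; ring,
      Rat.floor_intCast_div_intCast_of_pos _ hc, Int.neg_ediv,
      if_neg (not_dvd_mul_of_isCoprime hcx (by omega) (by omega)), Int.sign_eq_one_of_pos hc]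
  rw [hfloor, ← Units.val_neg, ← Int.negOnePow_succ]
  congr 1
  rw [Int.negOnePow_eq_iff]
  exact ⟨-(k * x / c) - 1, by ring⟩

lemma hardyS_neg_right {x c : ℤ} (hcx : IsCoprime c x) : hardyS x (-c) = -hardyS x c := by
  rcases lt_trichotomy c 0 with hc | rfl | hc
  · have h := hardyS_neg_right_of_pos (neg_pos.2 hc) hcx.neg_left
    rw [neg_neg] at h
    rw [h, neg_neg]
  · simp [hardyS_zero_right]
  · exact hardyS_neg_right_of_pos hc hcx

lemma mul_emod_mem_Icc {c x k : ℤ} (hcx : IsCoprime c x) (hk : k ∈ Icc 1 (c - 1)) :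
    k * x % c ∈ Icc 1 (c - 1) := by
  rw [mem_Icc] at hk ⊢
  have hc : 0 < c := by omega
  have hne : k * x % c ≠ 0 := fun h =>
    not_dvd_mul_of_isCoprime hcx (by omega) (by omega) (Int.dvd_of_emod_eq_zero h)
  have := Int.emod_nonneg (k * x) hc.ne'
  have := Int.emod_lt_of_pos (k * x) hc
  omega

lemma emod_mul_ediv_emod_of_det {a b c d k : ℤ} (hdet : a * d - b * c = 1) (hk₀ : 0 ≤ k)
    (hkc : k < c) : k * a % c * d / c = k * b - k * a / c * d ∧ k * a % c * d % c = k :=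
  (Int.ediv_emod_unique (by omega)).mpr
    ⟨by linear_combination (-d) * Int.emod_def (k * a) c - k * hdet, hk₀, hkc⟩

lemma hardyS_eq_of_pos {a b c d : ℤ} (hc : 0 < c) (hdet : a * d - b * c = 1)
    (hab : Odd (a + b)) (hcd : Odd (c + d)) : hardyS a c = hardyS d c := by
  have hdet' : d * a - b * c = 1 := by linear_combination hdet
  have hca : IsCoprime c a := ⟨-b, d, by linear_combination hdet⟩
  have hcd' : IsCoprime c d := ⟨-b, a, by linear_combination hdet⟩
  rw [hardyS_of_pos a hc, hardyS_of_pos d hc]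
  refine sum_nbij' (fun k => k * a % c) (fun j => j * d % c)
    (fun k hk => mul_emod_mem_Icc hca hk) (fun j hj => mul_emod_mem_Icc hcd' hj)
    (fun k hk => ?_) (fun j hj => ?_) (fun k hk => ?_) <;> rw [mem_Icc] at *
  · exact (emod_mul_ediv_emod_of_det hdet (by omega) (by omega)).2
  · exact (emod_mul_ediv_emod_of_det hdet' (by omega) (by omega)).2
  · rw [(emod_mul_ediv_emod_of_det hdet (by omega) (by omega)).1]
    congr 1
    rw [Int.negOnePow_eq_iff]
    obtain ⟨u, hu⟩ := hab
    obtain ⟨v, hv⟩ := hcd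
    refine ⟨k * a / c * (v + 1) - k * u, ?_⟩
    linear_combination k * a / c * hv - k * hu - Int.emod_def (k * a) c

lemma hardyS_eq_of_det {a b c d : ℤ} (hdet : a * d - b * c = 1) (hab : Odd (a + b))
    (hcd : Odd (c + d)) : hardyS a c = hardyS d c := by
  rcases lt_trichotomy c 0 with hc | rfl | hc
  · have hca : IsCoprime (-c) a := ⟨b, d, by linear_combination hdet⟩
    have hcd' : IsCoprime (-c) d := ⟨b, a, by linear_combination hdet⟩
    have h := hardyS_eq_of_pos (a := a) (b := -b) (d := d) (neg_pos.2 hc)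
      (by linear_combination hdet) (by simpa [parity_simps] using hab)
      (by simpa [parity_simps] using hcd)
    rw [← neg_neg c, hardyS_neg_right hca, hardyS_neg_right hcd', h]
  · simp only [hardyS_zero_right]
  · exact hardyS_eq_of_pos hc hdet hab hcd

lemma frakS_eq_hardyS (A : SL2Z) : frakS A = hardyS (A.1 0 0) (A.1 1 0) := by
  unfold frakS
  split_ifs with h
  · rw [h, hardyS_zero_right]
  · rfl

lemma SL2Z.det_eq (A : SL2Z) : A.1 0 0 * A.1 1 1 - A.1 0 1 * A.1 1 0 = 1 := by
  rw [← Matrix.det_fin_two, A.2]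

lemma odd_row_sums_of_inGammaTheta {A : SL2Z} (hA : inGammaTheta A) :
    Odd (A.1 0 0 + A.1 0 1) ∧ Odd (A.1 1 0 + A.1 1 1) := by
  have hodd : Odd (A.1 0 0 * A.1 1 1 - A.1 0 1 * A.1 1 0) := by rw [SL2Z.det_eq]; exact odd_one
  have had : Even (A.1 0 0) ↔ Even (A.1 1 1) := by simp only [Int.even_iff, hA.1]
  have hbc : Even (A.1 0 1) ↔ Even (A.1 1 0) := by simp only [Int.even_iff, hA.2]
  simp only [parity_simps, ← Int.not_even_iff_odd] at hodd ⊢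
  tauto

/-- **Proposition.** For all `A ∈ Γ_θ`, `𝔖(A⁻¹) = -𝔖(A)`. -/
theorem frakS_inv (A : SL2Z) (hA : inGammaTheta A) : frakS A⁻¹ = - frakS A := by
  obtain ⟨hab, hcd⟩ := odd_row_sums_of_inGammaTheta hA
  have hdet := SL2Z.det_eq A
  have hcop : IsCoprime (A.1 1 0) (A.1 1 1) := ⟨-A.1 0 1, A.1 0 0, by linear_combination hdet⟩
  rw [frakS_eq_hardyS, frakS_eq_hardyS, Matrix.SpecialLinearGroup.SL2_inv_expl A]
  simp only [Fin.isValue, Matrix.cons_val', Matrix.cons_val_zero, Matrix.cons_val_fin_one,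
    Matrix.cons_val_one]
  rw [hardyS_neg_right hcop, hardyS_eq_of_det hdet hab hcd]
end

section
/- Let A = (a b; c d) ∈ Γ_θ be written as A = ± T^{2n₀} S T^{2n₁} S ⋯ T^{2n_r} S T^{2n_{r+1}} with integers n₀,...,n_{r+1} and n₁,...,n_r all nonzero. Then a/c ∈ (-1, 1) if and only if n₀ = 0. -/
/-- The word `T^{2n₀} S T^{2n₁} S ⋯ T^{2n_r} S T^{2n_{r+1}}` associated to the list
`[n₀, n₁, …, n_r, n_{r+1}]` of exponents. -/
def wordProd : List ℤ → SL2Z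
  | [] => 1
  | [n] => Tmat ^ (2 * n)
  | n :: rest => Tmat ^ (2 * n) * Smat * wordProd rest

/-!
Only the first column `(a, c)` of the word matters. Multiplying on the left by `T^{2n} S` sends
it to `(2n a - c, a)`. If `|c| < |a|` and `n ≠ 0`, the new column again has its lower entry
strictly smaller in absolute value, since `|2n a - c| ≥ 2|a| - |c| > |a|`. Starting from the
column `(1, 0)` of `T^{2n_{r+1}}`, this shows `|c| < |a|` whenever all of `n₀, …, n_r` are
nonzero. For `n₀ = 0` the last step only swaps the column to `(-c, a)`, giving `|a| < |c|`.
-/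

lemma lt_abs_mul_sub_of_abs_lt {α : Type*} [Ring α] [LinearOrder α] [IsStrictOrderedRing α]
    {a c k : α} (hk : 2 ≤ |k|) (h : |c| < |a|) : |a| < |k * a - c| :=
  calc |a| < 2 * |a| - |c| := by
        rw [two_mul, add_sub_assoc]
        exact lt_add_of_pos_right _ (sub_pos.2 h)
    _ ≤ |k| * |a| - |c| := by gcongr
    _ = |k * a| - |c| := by rw [abs_mul]
    _ ≤ |k * a - c| := abs_sub_abs_le_abs_sub _ _

lemma coe_Tmat_zpow (n : ℤ) : ((Tmat ^ n : SL2Z) : Matrix (Fin 2) (Fin 2) ℤ) = !![1, n; 0, 1] :=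
  ModularGroup.coe_T_zpow n

lemma Tmat_zpow_mul_Smat_mul_apply_zero_zero (k : ℤ) (B : SL2Z) :
    (Tmat ^ k * Smat * B) 0 0 = k * B 0 0 - B 1 0 := by
  simp only [Matrix.SpecialLinearGroup.coe_mul, coe_Tmat_zpow]
  simp [Smat, Matrix.mul_apply, Fin.sum_univ_two]
  ring

lemma Tmat_zpow_mul_Smat_mul_apply_one_zero (k : ℤ) (B : SL2Z) :
    (Tmat ^ k * Smat * B) 1 0 = B 0 0 := by
  simp only [Matrix.SpecialLinearGroup.coe_mul, coe_Tmat_zpow]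
  simp [Smat, Matrix.mul_apply, Fin.sum_univ_two]

lemma wordProd_cons_cons (n m : ℤ) (rest : List ℤ) :
    wordProd (n :: m :: rest) = Tmat ^ (2 * n) * Smat * wordProd (m :: rest) := rfl

lemma abs_wordProd_one_zero_lt :
    ∀ ns : List ℤ, ns ≠ [] → (∀ i, i + 1 < ns.length → ns.getD i 0 ≠ 0) →
      |wordProd ns 1 0| < |wordProd ns 0 0|
  | [n], _, _ => by simp [wordProd, coe_Tmat_zpow]
  | n :: m :: rest, _, hne => by
    have hn : n ≠ 0 := by simpa using hne 0 (by simp)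
    have ih := abs_wordProd_one_zero_lt (m :: rest) (List.cons_ne_nil _ _)
      fun i hi => by simpa using hne (i + 1) (by simpa using hi)
    rw [wordProd_cons_cons, Tmat_zpow_mul_Smat_mul_apply_zero_zero,
      Tmat_zpow_mul_Smat_mul_apply_one_zero]
    refine lt_abs_mul_sub_of_abs_lt ?_ ih
    rw [abs_mul, abs_two]
    have := Int.one_le_abs hn
    linarith

/-- **Lemma.** Let `A = (a b; c d) = ± T^{2n₀} S T^{2n₁} S ⋯ T^{2n_r} S T^{2n_{r+1}}`
with `n₁, …, n_r` all nonzero. Then `a/c ∈ (-1,1)` (i.e. `|a| < |c|`) iff `n₀ = 0`. -/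
theorem word_head_zero_iff (ns : List ℤ) (hlen : 2 ≤ ns.length)
    (hmid : ∀ i : ℕ, 0 < i → i + 1 < ns.length → ns.getD i 0 ≠ 0)
    (A : SL2Z) (hA : A = wordProd ns ∨ A = - wordProd ns) :
    |A.1 0 0| < |A.1 1 0| ↔ ns.getD 0 0 = 0 := by
  obtain ⟨n, m, rest, rfl⟩ : ∃ n m rest, ns = n :: m :: rest := by
    match ns, hlen with
    | n :: m :: rest, _ => exact ⟨n, m, rest, rfl⟩
  have habs : ∀ i j, |A i j| = |wordProd (n :: m :: rest) i j| := by
    rcases hA with rfl | rfl <;> simp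
  rw [habs, habs, List.getD_cons_zero]
  by_cases hn : n = 0
  · have htail := abs_wordProd_one_zero_lt (m :: rest) (List.cons_ne_nil _ _)
      fun i hi => by simpa using hmid (i + 1) i.succ_pos (by simpa using hi)
    rw [wordProd_cons_cons, Tmat_zpow_mul_Smat_mul_apply_zero_zero,
      Tmat_zpow_mul_Smat_mul_apply_one_zero, hn]
    simpa using htail
  · have hword := abs_wordProd_one_zero_lt (n :: m :: rest) (List.cons_ne_nil _ _)
      fun | 0, _ => hn | i + 1, hi => hmid (i + 1) i.succ_pos hi
    simpa [hn] using hword.le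
end
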